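/- arXiv:0712.3979 — 4 statements merged into one kernel-verified Lean document; each statement's English description precedes it below -/
import Mathlib

section
/- If a QSO V has some coefficient P_{i_0 j_0, k_0} strictly between 0 and 1, then V is not an extreme point of the convex set of QSOs: V can be written as a nontrivial convex combination αV_1 + (1−α)V_2 of two distinct QSOs V_1 ≠ V_2, and moreover the combination preserves the zero-pattern of coefficients (P_{ij,k} = 0 iff P^{(1)}_{ij,k} = 0 and P^{(2)}_{ij,k} = 0). -/
/-- The cubic matrix `P` defines a quadratic stochastic operator. -/
def IsQSO (m : ℕ) (P : Fin m → Fin m → Fin m → ℝ) : Prop :=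
  (∀ i j k, 0 ≤ P i j k) ∧ (∀ i j k, P i j k = P j i k) ∧ (∀ i j, ∑ k, P i j k = 1)

/-!
Pick `k₁ ≠ k₀` with `P i₀ j₀ k₁ > 0` (it exists because the row sums to `1`) and move mass
`ε = min (P i₀ j₀ k₀) (P i₀ j₀ k₁)` between the entries `k₀` and `k₁` of the rows `(i₀, j₀)`
and `(j₀, i₀)`, in either direction. Both results are QSOs, `P` is their midpoint, and since the
perturbation is dominated by `P` it vanishes wherever `P` does.
-/

open Finset

theorem Fintype.exists_ne_pos_of_sum_eq_one {ι : Type*} [Fintype ι] {p : ι → ℝ}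
    (hp : ∀ k, 0 ≤ p k) (hsum : ∑ k, p k = 1) {k₀ : ι} (hk₀ : p k₀ < 1) :
    ∃ k₁, k₁ ≠ k₀ ∧ 0 < p k₁ := by
  by_contra! h
  have hzero : ∀ k ∈ univ, k ≠ k₀ → p k = 0 := fun k _ hk => (h k hk).antisymm (hp k)
  rw [sum_eq_single_of_mem k₀ (mem_univ k₀) hzero] at hsum
  exact hk₀.ne hsum

namespace IsQSO

variable {m : ℕ} {P D : Fin m → Fin m → Fin m → ℝ}

theorem add_of_abs_le (hP : IsQSO m P) (hDsymm : ∀ i j k, D i j k = D j i k)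
    (hDsum : ∀ i j, ∑ k, D i j k = 0) (hDle : ∀ i j k, |D i j k| ≤ P i j k) :
    IsQSO m (P + D) := by
  obtain ⟨-, hPsymm, hPsum⟩ := hP
  refine ⟨fun i j k => ?_, fun i j k => ?_, fun i j => ?_⟩
  · have := neg_abs_le (D i j k)
    simp only [Pi.add_apply]
    linarith [hDle i j k]
  · simp only [Pi.add_apply, hPsymm i j k, hDsymm i j k]
  · simp only [Pi.add_apply, sum_add_distrib, hPsum, hDsum, add_zero]

theorem sub_of_abs_le (hP : IsQSO m P) (hDsymm : ∀ i j k, D i j k = D j i k)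
    (hDsum : ∀ i j, ∑ k, D i j k = 0) (hDle : ∀ i j k, |D i j k| ≤ P i j k) :
    IsQSO m (P - D) := by
  rw [sub_eq_add_neg]
  refine hP.add_of_abs_le (fun i j k => ?_) (fun i j => ?_) (fun i j k => ?_)
  · simp only [Pi.neg_apply, hDsymm i j k]
  · simp only [Pi.neg_apply, sum_neg_distrib, hDsum, neg_zero]
  · simpa only [Pi.neg_apply, abs_neg] using hDle i j k

theorem exists_midpoint_of_perturbation (hP : IsQSO m P) (hDsymm : ∀ i j k, D i j k = D j i k)
    (hDsum : ∀ i j, ∑ k, D i j k = 0) (hDle : ∀ i j k, |D i j k| ≤ P i j k) (hD : D ≠ 0) :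
    ∃ (P₁ P₂ : Fin m → Fin m → Fin m → ℝ) (α : ℝ),
      0 < α ∧ α < 1 ∧ IsQSO m P₁ ∧ IsQSO m P₂ ∧ P₁ ≠ P₂ ∧
      (∀ i j k, P i j k = α * P₁ i j k + (1 - α) * P₂ i j k) ∧
      (∀ i j k, P i j k = 0 ↔ (P₁ i j k = 0 ∧ P₂ i j k = 0)) := by
  refine ⟨P + D, P - D, 1 / 2, by norm_num, by norm_num, hP.add_of_abs_le hDsymm hDsum hDle,
    hP.sub_of_abs_le hDsymm hDsum hDle, fun h => hD ?_, fun i j k => ?_, fun i j k => ?_⟩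
  · have hneg : D = -D := by simpa using congrArg (· - P) h
    exact self_eq_neg.mp hneg
  · simp only [Pi.add_apply, Pi.sub_apply]
    ring
  · simp only [Pi.add_apply, Pi.sub_apply]
    constructor
    · intro hzero
      have hDzero : D i j k = 0 := abs_nonpos_iff.mp (hzero ▸ hDle i j k)
      simp [hzero, hDzero]
    · rintro ⟨hadd, hsub⟩
      linarith

end IsQSO

def pairTransfer {m : ℕ} (i₀ j₀ k₀ k₁ : Fin m) (ε : ℝ) : Fin m → Fin m → Fin m → ℝ :=
  fun i j k =>
    if s(i, j) = s(i₀, j₀) then ε * (Pi.single k₀ 1 - Pi.single k₁ 1 : Fin m → ℝ) k else 0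

section pairTransfer

variable {m : ℕ} {i₀ j₀ k₀ k₁ : Fin m} {ε : ℝ}

theorem pairTransfer_symm (i j k : Fin m) :
    pairTransfer i₀ j₀ k₀ k₁ ε i j k = pairTransfer i₀ j₀ k₀ k₁ ε j i k := by
  simp only [pairTransfer, Sym2.eq_swap]

theorem sum_pairTransfer (i j : Fin m) : ∑ k, pairTransfer i₀ j₀ k₀ k₁ ε i j k = 0 := by
  unfold pairTransfer
  split_ifs <;> simp [← mul_sum]

theorem pairTransfer_self (hk : k₁ ≠ k₀) : pairTransfer i₀ j₀ k₀ k₁ ε i₀ j₀ k₀ = ε := by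
  simp [pairTransfer, hk]

theorem abs_pairTransfer_le {P : Fin m → Fin m → Fin m → ℝ} (hP : IsQSO m P) (hε : 0 ≤ ε)
    (hε₀ : ε ≤ P i₀ j₀ k₀) (hε₁ : ε ≤ P i₀ j₀ k₁) (i j k : Fin m) :
    |pairTransfer i₀ j₀ k₀ k₁ ε i j k| ≤ P i j k := by
  obtain ⟨hnonneg, hsymm, -⟩ := hP
  unfold pairTransfer
  split_ifs with hij
  · have hrow : P i j k = P i₀ j₀ k := by
      rcases Sym2.eq_iff.mp hij with ⟨rfl, rfl⟩ | ⟨rfl, rfl⟩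
      · rfl
      · exact hsymm i j k
    rw [hrow]
    by_cases h₀ : k = k₀ <;> by_cases h₁ : k = k₁ <;> subst_vars <;>
      simp [*, abs_of_nonneg hε]
  · simpa using hnonneg i j k

end pairTransfer

/-- a QSO having a coefficient strictly between 0 and 1 is not an
extreme point of the convex set of QSOs; it is a nontrivial convex combination of
two distinct QSOs preserving the zero-pattern. -/
theorem qso_not_extreme_of_interior_coeff (m : ℕ)
    (P : Fin m → Fin m → Fin m → ℝ) (hP : IsQSO m P)
    (i₀ j₀ k₀ : Fin m) (h0 : 0 < P i₀ j₀ k₀) (h1 : P i₀ j₀ k₀ < 1) :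
    ∃ (P₁ P₂ : Fin m → Fin m → Fin m → ℝ) (α : ℝ),
      0 < α ∧ α < 1 ∧ IsQSO m P₁ ∧ IsQSO m P₂ ∧ P₁ ≠ P₂ ∧
      (∀ i j k, P i j k = α * P₁ i j k + (1 - α) * P₂ i j k) ∧
      (∀ i j k, P i j k = 0 ↔ (P₁ i j k = 0 ∧ P₂ i j k = 0)) := by
  obtain ⟨k₁, hk₁, hpos⟩ :=
    Fintype.exists_ne_pos_of_sum_eq_one (hP.1 i₀ j₀) (hP.2.2 i₀ j₀) h1
  set ε := min (P i₀ j₀ k₀) (P i₀ j₀ k₁)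
  have hε : 0 < ε := lt_min h0 hpos
  refine hP.exists_midpoint_of_perturbation (D := pairTransfer i₀ j₀ k₀ k₁ ε)
    pairTransfer_symm sum_pairTransfer
    (abs_pairTransfer_le hP hε.le (min_le_left _ _) (min_le_right _ _)) fun hD => hε.ne' ?_
  rw [← pairTransfer_self (i₀ := i₀) (j₀ := j₀) (ε := ε) hk₁, hD]
  rfl
end

section
/- Consider f(x) = (a − 2c)x² + 2cx on [0,1] with a ∈ [0,1) and c ∈ [0,1/2]. Then x = 0 is the unique fixed point of f in [0,1], and for every x₀ ∈ [0,1] the iterates fⁿ(x₀) converge to 0 as n → ∞. -/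
/-- for f(x) = (a−2c)x² + 2cx with a ∈ [0,1), c ∈ [0,1/2], the point
0 is the unique fixed point in [0,1] and all iterates from [0,1] converge to 0. -/
theorem one_volterra_m2_small_c (a c : ℝ) (ha0 : 0 ≤ a) (ha1 : a < 1)
    (hc0 : 0 ≤ c) (hc1 : c ≤ 1 / 2) :
    let f : ℝ → ℝ := fun x => (a - 2 * c) * x ^ 2 + 2 * c * x
    (∀ x ∈ Set.Icc (0 : ℝ) 1, f x = x ↔ x = 0) ∧
    (∀ x₀ ∈ Set.Icc (0 : ℝ) 1,
      Filter.Tendsto (fun n => f^[n] x₀) Filter.atTop (nhds 0)) := by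
  intro f
  have hfix : ∀ x ∈ Set.Icc (0 : ℝ) 1, f x = x ↔ x = 0 := by
    intro x hx
    obtain ⟨hx0, hx1⟩ := hx
    constructor
    · intro h
      by_contra hne
      have hxp : 0 < x := lt_of_le_of_ne hx0 (Ne.symm hne)
      have h1 : 0 < (1 - a) * (x * x) := mul_pos (by linarith) (mul_pos hxp hxp)
      have h2 : 0 ≤ (1 - 2 * c) * (x * (1 - x)) := by
        apply mul_nonneg (by linarith)
        exact mul_nonneg hx0 (by linarith)
      have hfx : (a - 2 * c) * x ^ 2 + 2 * c * x = x := h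
      nlinarith [h1, h2]
    · intro h
      simp [f, h]
  refine ⟨hfix, ?_⟩
  intro x₀ hx₀
  have hmem : ∀ n, f^[n] x₀ ∈ Set.Icc (0 : ℝ) 1 := by
    intro n
    induction n with
    | zero => simpa using hx₀
    | succ n ih =>
      rw [Function.iterate_succ_apply']
      obtain ⟨h0, h1⟩ := ih
      set y := f^[n] x₀ with hy
      constructor
      · show 0 ≤ (a - 2 * c) * y ^ 2 + 2 * c * y
        nlinarith [mul_nonneg (mul_nonneg ha0 h0) h0,
          mul_nonneg (mul_nonneg hc0 h0) (by linarith : (0:ℝ) ≤ 1 - y)]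
      · show (a - 2 * c) * y ^ 2 + 2 * c * y ≤ 1
        nlinarith [mul_nonneg (mul_nonneg (by linarith : (0:ℝ) ≤ 1 - a) h0) h0,
          mul_nonneg (mul_nonneg (by linarith : (0:ℝ) ≤ 1 - 2 * c) h0)
            (by linarith : (0:ℝ) ≤ 1 - y)]
  have hanti : Antitone (fun n => f^[n] x₀) := by
    apply antitone_nat_of_succ_le
    intro n
    rw [Function.iterate_succ_apply']
    obtain ⟨h0, h1⟩ := hmem n
    set y := f^[n] x₀ with hy
    show (a - 2 * c) * y ^ 2 + 2 * c * y ≤ y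
    nlinarith [mul_nonneg (mul_nonneg (by linarith : (0:ℝ) ≤ 1 - a) h0) h0,
      mul_nonneg (mul_nonneg (by linarith : (0:ℝ) ≤ 1 - 2 * c) h0)
        (by linarith : (0:ℝ) ≤ 1 - y)]
  have hbdd : BddBelow (Set.range fun n => f^[n] x₀) := by
    refine ⟨0, ?_⟩
    rintro y ⟨n, rfl⟩
    exact (hmem n).1
  have htend := tendsto_atTop_ciInf hanti hbdd
  set L := ⨅ n, f^[n] x₀ with hL
  have hLmem : L ∈ Set.Icc (0 : ℝ) 1 :=
    isClosed_Icc.mem_of_tendsto htend (Filter.Eventually.of_forall hmem)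
  have hcont : Continuous f := by
    show Continuous fun x => (a - 2 * c) * x ^ 2 + 2 * c * x
    fun_prop
  have hfL : f L = L := by
    have h1 : Filter.Tendsto (fun n => f (f^[n] x₀)) Filter.atTop (nhds (f L)) :=
      (hcont.tendsto L).comp htend
    have h2 : Filter.Tendsto (fun n => f^[n + 1] x₀) Filter.atTop (nhds L) :=
      htend.comp (Filter.tendsto_add_atTop_nat 1)
    have heq : (fun n => f (f^[n] x₀)) = fun n => f^[n + 1] x₀ := by
      funext n; rw [Function.iterate_succ_apply']
    rw [heq] at h1
    exact tendsto_nhds_unique h1 h2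
  have hL0 : L = 0 := (hfix L hLmem).1 hfL
  rwa [hL0] at htend
end

section
/- For V(x,y) = (x(2c + (a−2c)x + 2(b−c)y), y(2c + 2(b−c)x + (a−2c)y)) on Δ = {x,y ≥ 0, x+y ≤ 1}, with a ∈ [0,1), b ∈ [0,1/2], c ≤ 1/2: the origin (0,0) is the unique fixed point of V in Δ, and every trajectory converges to (0,0). Moreover, if q = max{a, 2b, 2c} < 1 then the first coordinate satisfies x_n ≤ qⁿ x₀. -/
set_option maxHeartbeats 1000000


/-- for c ≤ 1/2, the origin is the unique fixed point of the reduced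
symmetric 2-Volterra QSO in Δ, every trajectory converges to the origin, and if
q = max{a,2b,2c} < 1 then the first coordinate of the iterates satisfies
x_n ≤ qⁿ x₀. -/
theorem global_attractor_symmetric_2volterra (a b c : ℝ)
    (ha0 : 0 ≤ a) (ha1 : a < 1) (hb0 : 0 ≤ b) (hb1 : b ≤ 1 / 2)
    (hc0 : 0 ≤ c) (hc1 : c ≤ 1 / 2) :
    let V : ℝ × ℝ → ℝ × ℝ := fun p =>
      (p.1 * (2 * c + (a - 2 * c) * p.1 + 2 * (b - c) * p.2),
       p.2 * (2 * c + 2 * (b - c) * p.1 + (a - 2 * c) * p.2))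
    let Δ : Set (ℝ × ℝ) := {p | 0 ≤ p.1 ∧ 0 ≤ p.2 ∧ p.1 + p.2 ≤ 1}
    let q : ℝ := max a (max (2 * b) (2 * c))
    (∀ p ∈ Δ, V p = p ↔ p = (0, 0)) ∧
    (∀ p ∈ Δ, Filter.Tendsto (fun n => V^[n] p) Filter.atTop (nhds (0, 0))) ∧
    (q < 1 → ∀ p ∈ Δ, ∀ n : ℕ, (V^[n] p).1 ≤ q ^ n * p.1) := by
  intro V Δ q
  have hq0 : 0 ≤ q := le_trans ha0 (le_max_left _ _)
  have hqa : a ≤ q := le_max_left _ _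
  have hqb : 2 * b ≤ q := le_trans (le_max_left _ _) (le_max_right _ _)
  have hqc : 2 * c ≤ q := le_trans (le_max_right _ _) (le_max_right _ _)
  -- bounds on the multiplier
  have hE : ∀ x y : ℝ, 0 ≤ x → 0 ≤ y → x + y ≤ 1 →
      0 ≤ 2 * c + (a - 2 * c) * x + 2 * (b - c) * y ∧
      2 * c + (a - 2 * c) * x + 2 * (b - c) * y ≤ 1 - (1 - a) * x ∧
      2 * c + (a - 2 * c) * x + 2 * (b - c) * y ≤ q := by
    intro x y hx hy hxy
    refine ⟨?_, ?_, ?_⟩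
    · nlinarith [mul_nonneg hc0 (by linarith : (0:ℝ) ≤ 1 - x - y),
        mul_nonneg ha0 hx, mul_nonneg hb0 hy]
    · nlinarith [mul_nonneg (by linarith : (0:ℝ) ≤ 1 - 2 * c)
        (by linarith : (0:ℝ) ≤ 1 - x - y),
        mul_nonneg (by linarith : (0:ℝ) ≤ 1 - 2 * b) hy]
    · nlinarith [mul_nonneg (by linarith : (0:ℝ) ≤ q - 2 * c)
        (by linarith : (0:ℝ) ≤ 1 - x - y),
        mul_nonneg (by linarith : (0:ℝ) ≤ q - a) hx,
        mul_nonneg (by linarith : (0:ℝ) ≤ q - 2 * b) hy]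
  -- invariance and decay
  have hVΔ : ∀ p : ℝ × ℝ, p ∈ Δ →
      (V p ∈ Δ ∧ (V p).1 ≤ p.1 ∧ (V p).2 ≤ p.2 ∧ (V p).1 ≤ q * p.1) := by
    rintro ⟨x, y⟩ ⟨hx, hy, hxy⟩
    replace hx : 0 ≤ x := hx
    replace hy : 0 ≤ y := hy
    replace hxy : x + y ≤ 1 := hxy
    obtain ⟨h10, h11, h1q⟩ := hE x y hx hy hxy
    obtain ⟨h20, h21, h2q⟩ := hE y x hy hx (by linarith)
    have e1 : (V (x, y)).1 = x * (2 * c + (a - 2 * c) * x + 2 * (b - c) * y) := rfl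
    have e2 : (V (x, y)).2 = y * (2 * c + 2 * (b - c) * x + (a - 2 * c) * y) := rfl
    refine ⟨⟨?_, ?_, ?_⟩, ?_, ?_, ?_⟩
    · rw [e1]; exact mul_nonneg hx h10
    · rw [e2]; nlinarith [mul_nonneg hy h20]
    · show (V (x, y)).1 + (V (x, y)).2 ≤ 1
      rw [e1, e2]
      nlinarith [mul_le_mul_of_nonneg_left h11 hx,
        mul_le_mul_of_nonneg_left h21 hy,
        mul_nonneg (mul_nonneg (by linarith : (0:ℝ) ≤ 1 - a) hx) hx,
        mul_nonneg (mul_nonneg (by linarith : (0:ℝ) ≤ 1 - a) hy) hy]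
    · show (V (x, y)).1 ≤ x
      rw [e1]
      nlinarith [mul_le_mul_of_nonneg_left h11 hx,
        mul_nonneg (mul_nonneg (by linarith : (0:ℝ) ≤ 1 - a) hx) hx]
    · show (V (x, y)).2 ≤ y
      rw [e2]
      nlinarith [mul_le_mul_of_nonneg_left h21 hy,
        mul_nonneg (mul_nonneg (by linarith : (0:ℝ) ≤ 1 - a) hy) hy]
    · show (V (x, y)).1 ≤ q * x
      rw [e1]
      nlinarith [mul_le_mul_of_nonneg_left h1q hx]
  -- fixed points
  have hfix : ∀ p ∈ Δ, V p = p ↔ p = (0, 0) := by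
    rintro ⟨x, y⟩ ⟨hx, hy, hxy⟩
    replace hx : 0 ≤ x := hx
    replace hy : 0 ≤ y := hy
    replace hxy : x + y ≤ 1 := hxy
    constructor
    · intro hV
      have h1 : x * (2 * c + (a - 2 * c) * x + 2 * (b - c) * y) = x :=
        congrArg Prod.fst hV
      have h2 : y * (2 * c + 2 * (b - c) * x + (a - 2 * c) * y) = y :=
        congrArg Prod.snd hV
      obtain ⟨-, h11, -⟩ := hE x y hx hy hxy
      obtain ⟨-, h21, -⟩ := hE y x hy hx (by linarith)
      have hx0 : x = 0 := by
        rcases eq_or_lt_of_le hx with h | h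
        · exact h.symm
        · exfalso
          have hE1 : 2 * c + (a - 2 * c) * x + 2 * (b - c) * y = 1 :=
            mul_left_cancel₀ (ne_of_gt h) (h1.trans (mul_one x).symm)
          have := mul_pos (sub_pos.2 ha1) h
          linarith
      have hy0 : y = 0 := by
        rcases eq_or_lt_of_le hy with h | h
        · exact h.symm
        · exfalso
          have hE2 : 2 * c + 2 * (b - c) * x + (a - 2 * c) * y = 1 :=
            mul_left_cancel₀ (ne_of_gt h) (h2.trans (mul_one y).symm)
          have := mul_pos (sub_pos.2 ha1) h
          linarith
      simp_all
    · rintro h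
      rw [Prod.mk.injEq] at h
      obtain ⟨rfl, rfl⟩ := h
      have e1 : (V ((0:ℝ), (0:ℝ))).1 = 0 * (2 * c + (a - 2 * c) * 0 + 2 * (b - c) * 0) := rfl
      have e2 : (V ((0:ℝ), (0:ℝ))).2 = 0 * (2 * c + 2 * (b - c) * 0 + (a - 2 * c) * 0) := rfl
      refine Prod.ext ?_ ?_
      · rw [e1]; ring
      · rw [e2]; ring
  -- invariance of Δ under iteration
  have hIter : ∀ p ∈ Δ, ∀ n : ℕ, V^[n] p ∈ Δ := by
    intro p hp n
    induction n with
    | zero => simpa using hp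
    | succ n ih =>
      rw [Function.iterate_succ_apply']
      exact (hVΔ _ ih).1
  refine ⟨hfix, ?_, ?_⟩
  · -- convergence
    intro p hp
    have hX0 : ∀ n, 0 ≤ (V^[n] p).1 := fun n => (hIter p hp n).1
    have hY0 : ∀ n, 0 ≤ (V^[n] p).2 := fun n => (hIter p hp n).2.1
    have hXanti : Antitone fun n => (V^[n] p).1 := by
      apply antitone_nat_of_succ_le
      intro n
      rw [Function.iterate_succ_apply']
      exact (hVΔ _ (hIter p hp n)).2.1
    have hYanti : Antitone fun n => (V^[n] p).2 := by
      apply antitone_nat_of_succ_le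
      intro n
      rw [Function.iterate_succ_apply']
      exact (hVΔ _ (hIter p hp n)).2.2.1
    have hXlim : Filter.Tendsto (fun n => (V^[n] p).1) Filter.atTop
        (nhds (⨅ n, (V^[n] p).1)) :=
      tendsto_atTop_ciInf hXanti ⟨0, by rintro _ ⟨n, rfl⟩; exact hX0 n⟩
    have hYlim : Filter.Tendsto (fun n => (V^[n] p).2) Filter.atTop
        (nhds (⨅ n, (V^[n] p).2)) :=
      tendsto_atTop_ciInf hYanti ⟨0, by rintro _ ⟨n, rfl⟩; exact hY0 n⟩
    have hlim : Filter.Tendsto (fun n => V^[n] p) Filter.atTop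
        (nhds (⨅ n, (V^[n] p).1, ⨅ n, (V^[n] p).2)) := by
      simpa only [Prod.mk.eta] using hXlim.prodMk_nhds hYlim
    have hcont : Continuous V := by
      show Continuous (fun p : ℝ × ℝ =>
        (p.1 * (2 * c + (a - 2 * c) * p.1 + 2 * (b - c) * p.2),
         p.2 * (2 * c + 2 * (b - c) * p.1 + (a - 2 * c) * p.2)))
      fun_prop
    have hsucc : Filter.Tendsto (fun n => V^[n+1] p) Filter.atTop
        (nhds (⨅ n, (V^[n] p).1, ⨅ n, (V^[n] p).2)) :=
      hlim.comp (Filter.tendsto_add_atTop_nat 1)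
    have hsucc' : Filter.Tendsto (fun n => V^[n+1] p) Filter.atTop
        (nhds (V (⨅ n, (V^[n] p).1, ⨅ n, (V^[n] p).2))) := by
      have h := (hcont.tendsto _).comp hlim
      have e : (V ∘ fun n => V^[n] p) = fun n => V^[n+1] p := by
        funext n
        exact (Function.iterate_succ_apply' V n p).symm
      rwa [e] at h
    have hfixLM : V (⨅ n, (V^[n] p).1, ⨅ n, (V^[n] p).2) =
        (⨅ n, (V^[n] p).1, ⨅ n, (V^[n] p).2) :=
      tendsto_nhds_unique hsucc' hsucc
    have hmem : (⨅ n, (V^[n] p).1, ⨅ n, (V^[n] p).2) ∈ Δ := by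
      refine ⟨le_ciInf hX0, le_ciInf hY0, ?_⟩
      exact le_of_tendsto' (hXlim.add hYlim) fun n => (hIter p hp n).2.2
    have h0 : ((⨅ n, (V^[n] p).1 : ℝ), (⨅ n, (V^[n] p).2 : ℝ)) = ((0 : ℝ), (0 : ℝ)) :=
      (hfix _ hmem).mp hfixLM
    rw [h0] at hlim
    exact hlim
  · -- geometric decay of the first coordinate
    intro _ p hp n
    induction n with
    | zero => simp
    | succ n ih =>
      rw [Function.iterate_succ_apply']
      calc (V (V^[n] p)).1 ≤ q * (V^[n] p).1 := (hVΔ _ (hIter p hp n)).2.2.2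
        _ ≤ q * (q ^ n * p.1) := mul_le_mul_of_nonneg_left ih hq0
        _ = q ^ (n + 1) * p.1 := by ring
end

section
/- For V(x,y) = (x(2c + (a−2c)x + 2(b−c)y), y(2c + 2(b−c)x + (a−2c)y)) on Δ with a ∈ [0,1), b ∈ [0,1/2], c > 1/2, and a ≠ 2b, V has exactly four fixed points in Δ: λ₀ = (0,0), λ₁ = (0, (2c−1)/(2c−a)), λ₂ = ((2c−1)/(2c−a), 0), and λ₃ = ((2c−1)/(4c−a−2b), (2c−1)/(4c−a−2b)). -/
/-!
Away from the coordinate axes a fixed point of `V` satisfies two linear equations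
(divide each coordinate equation by `x`, resp. `y`). On an axis only one of them survives and
yields `λ₁` or `λ₂`; off the axes their difference is `(a - 2b)(x - y) = 0`, which forces
`x = y` and hence `λ₃`. All four points lie in `Δ` because `c > 1/2`, `a < 1` and `b ≤ 1/2`.
-/

open Function

namespace SymmVolterra

variable {a b c x y : ℝ}

def map (a b c : ℝ) (p : ℝ × ℝ) : ℝ × ℝ :=
  (p.1 * (2 * c + (a - 2 * c) * p.1 + 2 * (b - c) * p.2),
   p.2 * (2 * c + 2 * (b - c) * p.1 + (a - 2 * c) * p.2))

def simplex : Set (ℝ × ℝ) := {p | 0 ≤ p.1 ∧ 0 ≤ p.2 ∧ p.1 + p.2 ≤ 1}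

theorem isFixedPt_map_iff :
    IsFixedPt (map a b c) (x, y) ↔
      (x = 0 ∨ 2 * c + (a - 2 * c) * x + 2 * (b - c) * y = 1) ∧
      (y = 0 ∨ 2 * c + 2 * (b - c) * x + (a - 2 * c) * y = 1) := by
  simp only [IsFixedPt, map, Prod.mk.injEq, mul_right_eq_self₀, or_comm]

theorem axis_eq_one_iff (h : 2 * c - a ≠ 0) :
    2 * c + (a - 2 * c) * x = 1 ↔ x = (2 * c - 1) / (2 * c - a) := by
  rw [eq_div_iff h]
  constructor <;> intro hx <;> linear_combination -hx

theorem diagonal_eqs_iff (hab : a ≠ 2 * b) (hsum : 4 * c - a - 2 * b ≠ 0) :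
    (2 * c + (a - 2 * c) * x + 2 * (b - c) * y = 1 ∧
      2 * c + 2 * (b - c) * x + (a - 2 * c) * y = 1) ↔
      x = (2 * c - 1) / (4 * c - a - 2 * b) ∧ y = (2 * c - 1) / (4 * c - a - 2 * b) := by
  constructor
  · rintro ⟨hx, hy⟩
    have hdiff : (a - 2 * b) * (x - y) = 0 := by linear_combination hx - hy
    have hxy : x = y :=
      sub_eq_zero.mp ((mul_eq_zero.mp hdiff).resolve_left (sub_ne_zero.mpr hab))
    have hxval : x = (2 * c - 1) / (4 * c - a - 2 * b) := by
      rw [eq_div_iff hsum]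
      linear_combination -hx + 2 * (c - b) * hxy
    exact ⟨hxval, hxy ▸ hxval⟩
  · rintro ⟨rfl, rfl⟩
    have hs := div_mul_cancel₀ (2 * c - 1) hsum
    constructor <;> linear_combination -hs

theorem fixedPoints_map (h2ca : 2 * c - a ≠ 0) (hsum : 4 * c - a - 2 * b ≠ 0)
    (hab : a ≠ 2 * b) :
    fixedPoints (map a b c) =
      {((0 : ℝ), (0 : ℝ)), (0, (2 * c - 1) / (2 * c - a)),
       ((2 * c - 1) / (2 * c - a), 0),
       ((2 * c - 1) / (4 * c - a - 2 * b), (2 * c - 1) / (4 * c - a - 2 * b))} := by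
  ext ⟨x, y⟩
  rw [mem_fixedPoints, isFixedPt_map_iff]
  simp only [Set.mem_insert_iff, Set.mem_singleton_iff, Prod.mk.injEq]
  constructor
  · rintro ⟨rfl | hx, rfl | hy⟩
    · exact .inl ⟨rfl, rfl⟩
    · refine .inr (.inl ⟨rfl, (axis_eq_one_iff h2ca).mp ?_⟩)
      linear_combination hy
    · refine .inr (.inr (.inl ⟨(axis_eq_one_iff h2ca).mp ?_, rfl⟩))
      linear_combination hx
    · exact .inr (.inr (.inr ((diagonal_eqs_iff hab hsum).mp ⟨hx, hy⟩)))
  · rintro (⟨rfl, rfl⟩ | ⟨rfl, rfl⟩ | ⟨rfl, rfl⟩ | hdiag)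
    · exact ⟨.inl rfl, .inl rfl⟩
    · refine ⟨.inl rfl, .inr ?_⟩
      linear_combination (axis_eq_one_iff h2ca).mpr rfl
    · refine ⟨.inr ?_, .inl rfl⟩
      linear_combination (axis_eq_one_iff h2ca).mpr rfl
    · exact ((diagonal_eqs_iff hab hsum).mpr hdiag).imp .inr .inr

theorem fixedPoints_map_subset_simplex (ha1 : a < 1) (hb1 : b ≤ 1 / 2) (hc : 1 / 2 < c)
    (hab : a ≠ 2 * b) :
    fixedPoints (map a b c) ⊆ simplex := by
  have h2ca : 0 < 2 * c - a := by linarith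
  have hsum : 0 < 4 * c - a - 2 * b := by linarith
  have hnum : 0 ≤ 2 * c - 1 := by linarith
  have haxis : (2 * c - 1) / (2 * c - a) ≤ 1 := by rw [div_le_one h2ca]; linarith
  have hdiag : (2 * c - 1) / (4 * c - a - 2 * b) + (2 * c - 1) / (4 * c - a - 2 * b) ≤ 1 := by
    rw [← add_div, div_le_one hsum]; linarith
  rw [fixedPoints_map h2ca.ne' hsum.ne' hab]
  rintro p (rfl | rfl | rfl | rfl) <;> simp only [simplex, Set.mem_ofPred_eq]
  · norm_num
  · exact ⟨le_rfl, div_nonneg hnum h2ca.le, by rwa [zero_add]⟩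
  · exact ⟨div_nonneg hnum h2ca.le, le_rfl, by rwa [add_zero]⟩
  · exact ⟨div_nonneg hnum hsum.le, div_nonneg hnum hsum.le, hdiag⟩

end SymmVolterra

open SymmVolterra in
theorem four_fixed_points_symmetric_2volterra_general (a b c : ℝ)
    (ha1 : a < 1) (hb1 : b ≤ 1 / 2)
    (hc : 1 / 2 < c) (hab : a ≠ 2 * b) :
    let V : ℝ × ℝ → ℝ × ℝ := fun p =>
      (p.1 * (2 * c + (a - 2 * c) * p.1 + 2 * (b - c) * p.2),
       p.2 * (2 * c + 2 * (b - c) * p.1 + (a - 2 * c) * p.2))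
    let Δ : Set (ℝ × ℝ) := {p | 0 ≤ p.1 ∧ 0 ≤ p.2 ∧ p.1 + p.2 ≤ 1}
    {p ∈ Δ | V p = p} =
      {((0 : ℝ), (0 : ℝ)), (0, (2 * c - 1) / (2 * c - a)),
       ((2 * c - 1) / (2 * c - a), 0),
       ((2 * c - 1) / (4 * c - a - 2 * b), (2 * c - 1) / (4 * c - a - 2 * b))} := by
  intro V Δ
  change {p | p ∈ simplex ∧ p ∈ fixedPoints (map a b c)} = _
  rw [Set.sep_mem_eq, Set.inter_eq_right.mpr (fixedPoints_map_subset_simplex ha1 hb1 hc hab),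
    fixedPoints_map (by linarith) (by linarith) hab]

/-- for c > 1/2 and a ≠ 2b, the reduced symmetric 2-Volterra QSO has
exactly four fixed points in Δ: λ₀, λ₁, λ₂, λ₃. -/
theorem four_fixed_points_symmetric_2volterra (a b c : ℝ)
    (ha0 : 0 ≤ a) (ha1 : a < 1) (hb0 : 0 ≤ b) (hb1 : b ≤ 1 / 2)
    (hc : 1 / 2 < c) (hc1 : c ≤ 1) (hab : a ≠ 2 * b) :
    let V : ℝ × ℝ → ℝ × ℝ := fun p =>
      (p.1 * (2 * c + (a - 2 * c) * p.1 + 2 * (b - c) * p.2),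
       p.2 * (2 * c + 2 * (b - c) * p.1 + (a - 2 * c) * p.2))
    let Δ : Set (ℝ × ℝ) := {p | 0 ≤ p.1 ∧ 0 ≤ p.2 ∧ p.1 + p.2 ≤ 1}
    {p ∈ Δ | V p = p} =
      {((0 : ℝ), (0 : ℝ)), (0, (2 * c - 1) / (2 * c - a)),
       ((2 * c - 1) / (2 * c - a), 0),
       ((2 * c - 1) / (4 * c - a - 2 * b), (2 * c - 1) / (4 * c - a - 2 * b))} :=
  four_fixed_points_symmetric_2volterra_general a b c ha1 hb1 hc hab
end
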